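/- Let f: M₁ → M₂ be a (t₁, t₂, λ)-biometric embedding with recovery information g, and let (SS, Rec) be an average-case (M₂, m₁ − λ, m̃₂, t₂)-secure sketch. Define SS'(w) = (SS(f(w)), g(w)) and Rec'(w', (s, r)) as the function that computes Rec(f(w'), s) to obtain f(w) and then inverts the pair (f(w), r) to obtain w. Then (SS', Rec') is an average-case (M₁, m₁, m̃₂, t₁)-secure sketch. -/
import Mathlib


open Finset

/-- A probability distribution on a finite type. -/
def IsDist {α : Type*} [Fintype α] (p : α → ℝ) : Prop :=
  (∀ a, 0 ≤ p a) ∧ ∑ a, p a = 1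

/-- Average min-entropy `H̃∞(A | B)`. -/
noncomputable def avgMinEntropy {α β : Type*} [Fintype α] [Fintype β] (p : α × β → ℝ) : ℝ :=
  - Real.logb 2 (∑ b, ⨆ a, p (a, b))

private lemma sum_sup_pos {α β : Type*} [Fintype α] [Fintype β]
    (p : α × β → ℝ) (h0 : ∀ x, 0 ≤ p x) (h1 : ∑ x, p x = 1) :
    0 < ∑ b, ⨆ a, p (a, b) := by
  by_contra h
  push_neg at h
  have hsup : ∀ b : β, 0 ≤ ⨆ a, p (a, b) := fun b => Real.iSup_nonneg (fun a => h0 _)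
  have hT : ∑ b, ⨆ a, p (a, b) = 0 :=
    le_antisymm h (Finset.sum_nonneg fun b _ => hsup b)
  have hsz : ∀ b : β, (⨆ a, p (a, b)) = 0 := fun b =>
    (Finset.sum_eq_zero_iff_of_nonneg (fun b _ => hsup b)).mp hT b (mem_univ b)
  have hpz : ∀ x : α × β, p x ≤ 0 := by
    rintro ⟨a, b⟩
    have := le_ciSup (Finite.bddAbove_range fun a => p (a, b)) a
    simpa [hsz b] using this
  have : (1:ℝ) ≤ 0 := h1 ▸ Finset.sum_nonpos (fun x _ => hpz x)
  linarith

/-- Let `f : M₁ → M₂` be a `(t₁, t₂, λ)`-biometric embedding with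
recovery information `g`, and let `(SS, Rec)` be an average-case
`(M₂, m₁ − λ, m̃₂, t₂)`-secure sketch. Then `SS'(w) = (SS(f w), g w)` together with the
recovery procedure that runs `Rec` and inverts `(f w, g w)` is an average-case
`(M₁, m₁, m̃₂, t₁)`-secure sketch. -/
theorem secure_sketch_of_embedding_with_recovery {M₁ M₂ G R S : Type}
    [Fintype M₁] [Fintype M₂] [Fintype G] [Fintype R] [Fintype S]
    [Nonempty R] [DecidableEq S] [DecidableEq G]
    (dis₁ : M₁ → M₁ → ℝ) (dis₂ : M₂ → M₂ → ℝ)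
    (f : M₁ → M₂) (g : M₁ → G) (t₁ t₂ lam m₁ mt₂ : ℝ)
    -- f is a (t₁, t₂, λ)-biometric embedding with recovery information g:
    (hdist : ∀ w w' : M₁, dis₁ w w' ≤ t₁ → dis₂ (f w) (f w') ≤ t₂)
    (hrange : ((Finset.univ.image g).card : ℝ) ≤ 2 ^ lam)
    (hinj : ∀ w₁ w₂ : M₁, f w₁ = f w₂ → g w₁ = g w₂ → w₁ = w₂)
    (SS : M₂ → R → S) (Rec : M₂ → S → M₂)
    -- (SS, Rec) is an average-case (M₂, m₁ − λ, m̃₂, t₂)-secure sketch: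
    (hcorr : ∀ (v v' : M₂) (r : R), dis₂ v v' ≤ t₂ → Rec v' (SS v r) = v)
    (hsec : ∀ (ι : Type) [Fintype ι] (p : M₂ × ι → ℝ),
      IsDist p → m₁ - lam ≤ avgMinEntropy p →
        mt₂ ≤ avgMinEntropy (fun x : M₂ × S × ι =>
          p (x.1, x.2.2) * ((Finset.univ.filter fun r => SS x.1 r = x.2.1).card : ℝ)
            / (Fintype.card R : ℝ))) :
    -- (SS', Rec') is an average-case (M₁, m₁, m̃₂, t₁)-secure sketch:
    ∃ Rec' : M₁ → S × G → M₁,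
      (∀ (w w' : M₁) (r : R), dis₁ w w' ≤ t₁ → Rec' w' (SS (f w) r, g w) = w) ∧
      ∀ (ι : Type) [Fintype ι] (p : M₁ × ι → ℝ), IsDist p → m₁ ≤ avgMinEntropy p →
        mt₂ ≤ avgMinEntropy (fun x : M₁ × (S × G) × ι =>
          p (x.1, x.2.2) *
            ((Finset.univ.filter fun r : R => (SS (f x.1) r, g x.1) = x.2.1).card : ℝ)
            / (Fintype.card R : ℝ)) := by
  classical
  refine ⟨fun w' sr =>
      if h : ∃ w, f w = Rec (f w') sr.1 ∧ g w = sr.2 then h.choose else w', ?_, ?_⟩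
  · -- correctness
    intro w w' r hle
    have h2 : Rec (f w') (SS (f w) r) = f w := hcorr _ _ r (hdist w w' hle)
    have hex : ∃ u, f u = Rec (f w') (SS (f w) r, g w).1 ∧ g u = (SS (f w) r, g w).2 :=
      ⟨w, by simp [h2]⟩
    simp only [dif_pos hex]
    obtain ⟨h3, h4⟩ := hex.choose_spec
    exact hinj _ _ (by rw [h3]; exact h2) h4
  · -- security
    intro ι _ p hp hm
    by_cases hM : Nonempty M₁
    swap
    · exfalso
      have : IsEmpty M₁ := not_nonempty_iff.mp hM
      have : ∑ x : M₁ × ι, p x = 0 := by simp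
      rw [hp.2] at this; linarith
    have hM₂ : Nonempty M₂ := ⟨f hM.some⟩
    -- the induced distribution on M₂ × (G × ι)
    set q : M₂ × G × ι → ℝ :=
      fun x => ∑ w ∈ univ.filter (fun w => f w = x.1 ∧ g w = x.2.1), p (w, x.2.2) with hqdef
    have hq0 : ∀ x, 0 ≤ q x := fun x => Finset.sum_nonneg fun w _ => hp.1 _
    -- the fiber of (v, gg) has at most one element
    have hfib : ∀ (v : M₂) (gg : G),
        (univ.filter (fun w => f w = v ∧ g w = gg) : Finset M₁) = ∅ ∨
        ∃ w₀, (univ.filter (fun w => f w = v ∧ g w = gg) : Finset M₁) = {w₀} := by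
      intro v gg
      rcases Finset.eq_empty_or_nonempty (univ.filter (fun w => f w = v ∧ g w = gg)) with h | h
      · exact Or.inl h
      · obtain ⟨w₀, hw₀⟩ := h
        refine Or.inr ⟨w₀, Finset.eq_singleton_iff_unique_mem.mpr ⟨hw₀, ?_⟩⟩
        intro x hx
        simp only [mem_filter, mem_univ, true_and] at hx hw₀
        exact hinj _ _ (hx.1.trans hw₀.1.symm) (hx.2.trans hw₀.2.symm)
    have hfibsum : ∀ (i : ι),
        ∑ vg : M₂ × G, (∑ w ∈ univ.filter (fun w => f w = vg.1 ∧ g w = vg.2), p (w, i))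
          = ∑ w, p (w, i) := by
      intro i
      rw [← Finset.sum_fiberwise univ (fun w => (f w, g w)) (fun w => p (w, i))]
      refine Finset.sum_congr rfl fun vg _ => ?_
      refine Finset.sum_congr ?_ (fun _ _ => rfl)
      ext w
      simp [Prod.ext_iff]
    have hq : IsDist q := by
      refine ⟨hq0, ?_⟩
      rw [← hp.2]
      calc ∑ x : M₂ × G × ι, q x
          = ∑ y : (M₂ × G) × ι, q (y.1.1, y.1.2, y.2) := by
            rw [← Fintype.sum_equiv (Equiv.prodAssoc M₂ G ι)
                (fun y => q (y.1.1, y.1.2, y.2)) q (fun y => rfl)]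
        _ = ∑ vg : M₂ × G, ∑ i : ι, q (vg.1, vg.2, i) := by
            rw [Fintype.sum_prod_type]
        _ = ∑ i : ι, ∑ vg : M₂ × G, q (vg.1, vg.2, i) := Finset.sum_comm
        _ = ∑ i : ι, ∑ w, p (w, i) := by
            refine Finset.sum_congr rfl fun i _ => ?_
            exact hfibsum i
        _ = ∑ x : M₁ × ι, p x := by rw [Fintype.sum_prod_type_right]
    -- entropy bound for q
    have hTp_pos : 0 < ∑ i : ι, ⨆ w : M₁, p (w, i) := sum_sup_pos p hp.1 hp.2
    have hTq_pos : 0 < ∑ b : G × ι, ⨆ v : M₂, q (v, b) := sum_sup_pos q hq.1 hq.2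
    have hTp_le : ∑ i : ι, ⨆ w : M₁, p (w, i) ≤ (2:ℝ) ^ (-m₁) := by
      have h1 : Real.logb 2 (∑ i : ι, ⨆ w : M₁, p (w, i)) ≤ -m₁ := by
        have := hm
        unfold avgMinEntropy at this
        linarith
      calc ∑ i : ι, ⨆ w : M₁, p (w, i)
          = (2:ℝ) ^ Real.logb 2 (∑ i : ι, ⨆ w : M₁, p (w, i)) :=
            (Real.rpow_logb two_pos (by norm_num) hTp_pos).symm
        _ ≤ (2:ℝ) ^ (-m₁) := Real.rpow_le_rpow_of_exponent_le one_le_two h1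
    have hsup_le : ∀ (gg : G) (i : ι),
        (⨆ v : M₂, q (v, gg, i)) ≤
          (if gg ∈ univ.image g then ⨆ w : M₁, p (w, i) else 0) := by
      intro gg i
      refine ciSup_le fun v => ?_
      by_cases hgg : gg ∈ univ.image g
      · rw [if_pos hgg]
        rcases hfib v gg with h | ⟨w₀, h⟩
        · simp only [hqdef]; simp only [h, Finset.sum_empty]
          exact Real.iSup_nonneg fun w => hp.1 _
        · simp only [hqdef]; simp only [h, Finset.sum_singleton]
          exact le_ciSup (Finite.bddAbove_range fun w => p (w, i)) w₀
      · rw [if_neg hgg]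
        simp only [hqdef]
        refine le_of_eq (Finset.sum_eq_zero fun w hw => ?_)
        simp only [mem_filter, mem_univ, true_and] at hw
        exact absurd (hw.2 ▸ Finset.mem_image_of_mem g (mem_univ w)) hgg
    have hTq_le : ∑ b : G × ι, ⨆ v : M₂, q (v, b) ≤ (2:ℝ) ^ (lam - m₁) := by
      calc ∑ b : G × ι, ⨆ v : M₂, q (v, b)
          = ∑ gg : G, ∑ i : ι, ⨆ v : M₂, q (v, gg, i) := by rw [Fintype.sum_prod_type]
        _ ≤ ∑ gg : G, ∑ i : ι,
            (if gg ∈ univ.image g then ⨆ w : M₁, p (w, i) else 0) := by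
            refine Finset.sum_le_sum fun gg _ => Finset.sum_le_sum fun i _ => ?_
            exact hsup_le gg i
        _ = ∑ gg : G, (if gg ∈ univ.image g then ∑ i : ι, ⨆ w : M₁, p (w, i) else 0) := by
            refine Finset.sum_congr rfl fun gg _ => ?_
            split_ifs with h
            · rfl
            · simp
        _ = ((univ.image g).card : ℝ) * ∑ i : ι, ⨆ w : M₁, p (w, i) := by
            rw [Finset.sum_ite_mem, Finset.univ_inter, Finset.sum_const, nsmul_eq_mul]
        _ ≤ (2:ℝ) ^ lam * (2:ℝ) ^ (-m₁) := by
            exact mul_le_mul hrange hTp_le (le_of_lt hTp_pos) (by positivity)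
        _ = (2:ℝ) ^ (lam - m₁) := by
            rw [← Real.rpow_add two_pos]; ring_nf
    have hqent : m₁ - lam ≤ avgMinEntropy q := by
      unfold avgMinEntropy
      have h1 : Real.logb 2 (∑ b : G × ι, ⨆ v : M₂, q (v, b)) ≤ lam - m₁ := by
        calc Real.logb 2 (∑ b : G × ι, ⨆ v : M₂, q (v, b))
            ≤ Real.logb 2 ((2:ℝ) ^ (lam - m₁)) :=
              (Real.logb_le_logb one_lt_two hTq_pos (by positivity)).mpr hTq_le
          _ = lam - m₁ := Real.logb_rpow two_pos (by norm_num)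
      linarith
    have hkey := hsec (G × ι) q hq hqent
    -- now identify the two entropies
    have hcount : ∀ (w : M₁) (s : S) (gg : G),
        ((univ.filter fun r : R => (SS (f w) r, g w) = (s, gg)).card : ℝ)
          = if g w = gg then ((univ.filter fun r : R => SS (f w) r = s).card : ℝ) else 0 := by
      intro w s gg
      split_ifs with h
      · congr 1
        refine congrArg Finset.card (Finset.filter_congr fun r _ => ?_)
        simp [Prod.ext_iff, h]
      · have he : (univ.filter fun r : R => (SS (f w) r, g w) = (s, gg)) = ∅ := by
          rw [Finset.filter_eq_empty_iff]
          intro r _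
          rw [Prod.mk.injEq]
          tauto
        rw [he, Finset.card_empty, Nat.cast_zero]
    have hRpos : (0:ℝ) < (Fintype.card R : ℝ) := by
      exact_mod_cast Fintype.card_pos
    have hsup_eq : ∀ (s : S) (gg : G) (i : ι),
        (⨆ w : M₁, p (w, i) *
            ((univ.filter fun r : R => (SS (f w) r, g w) = (s, gg)).card : ℝ)
            / (Fintype.card R : ℝ))
          = ⨆ v : M₂, q (v, gg, i) *
            ((univ.filter fun r : R => SS v r = s).card : ℝ) / (Fintype.card R : ℝ) := by
      intro s gg i
      have hGn : ∀ v : M₂, 0 ≤ q (v, gg, i) *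
          ((univ.filter fun r : R => SS v r = s).card : ℝ) / (Fintype.card R : ℝ) := fun v =>
        div_nonneg (mul_nonneg (hq0 _) (Nat.cast_nonneg _)) hRpos.le
      have hFn : ∀ w : M₁, 0 ≤ p (w, i) *
          ((univ.filter fun r : R => (SS (f w) r, g w) = (s, gg)).card : ℝ)
          / (Fintype.card R : ℝ) := by
        intro w
        exact div_nonneg (mul_nonneg (hp.1 _) (Nat.cast_nonneg _)) hRpos.le
      refine le_antisymm (ciSup_le fun w => ?_) (ciSup_le fun v => ?_)
      · rw [hcount w s gg]
        by_cases h : g w = gg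
        · rw [if_pos h]
          have hq_ge : p (w, i) ≤ q (f w, gg, i) := by
            simp only [hqdef]
            refine Finset.single_le_sum (f := fun x : M₁ => p (x, i)) (fun x _ => hp.1 _) ?_
            simp [h]
          calc p (w, i) * ((univ.filter fun r : R => SS (f w) r = s).card : ℝ)
                / (Fintype.card R : ℝ)
              ≤ q (f w, gg, i) * ((univ.filter fun r : R => SS (f w) r = s).card : ℝ)
                / (Fintype.card R : ℝ) := by
                gcongr
            _ ≤ _ := le_ciSup (f := fun v : M₂ => q (v, gg, i) *
                ((univ.filter fun r : R => SS v r = s).card : ℝ) / (Fintype.card R : ℝ))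
                (Finite.bddAbove_range _) (f w)
        · rw [if_neg h]
          simp only [mul_zero, zero_div]
          exact Real.iSup_nonneg hGn
      · rcases hfib v gg with h | ⟨w₀, h⟩
        · have : q (v, gg, i) = 0 := by simp only [hqdef]; simp only [h, Finset.sum_empty]
          rw [this, zero_mul, zero_div]
          exact Real.iSup_nonneg hFn
        · have hw₀ : f w₀ = v ∧ g w₀ = gg := by
            have : w₀ ∈ univ.filter (fun w => f w = v ∧ g w = gg) := by
              rw [h]; exact Finset.mem_singleton_self w₀
            simpa using this
          have hqv : q (v, gg, i) = p (w₀, i) := by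
            simp only [hqdef]; simp only [h, Finset.sum_singleton]
          rw [hqv, ← hw₀.1]
          have : p (w₀, i) * ((univ.filter fun r : R => SS (f w₀) r = s).card : ℝ)
              / (Fintype.card R : ℝ)
              = p (w₀, i) *
                ((univ.filter fun r : R => (SS (f w₀) r, g w₀) = (s, gg)).card : ℝ)
                / (Fintype.card R : ℝ) := by
            rw [hcount w₀ s gg, if_pos hw₀.2]
          rw [this]
          exact le_ciSup (f := fun w : M₁ => p (w, i) *
              ((univ.filter fun r : R => (SS (f w) r, g w) = (s, gg)).card : ℝ)
              / (Fintype.card R : ℝ)) (Finite.bddAbove_range _) w₀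
    have hsum_eq :
        (∑ b : (S × G) × ι, ⨆ w : M₁, p (w, b.2) *
            ((univ.filter fun r : R => (SS (f w) r, g w) = b.1).card : ℝ)
            / (Fintype.card R : ℝ))
        = ∑ b : S × G × ι, ⨆ v : M₂, q (v, b.2) *
            ((univ.filter fun r : R => SS v r = b.1).card : ℝ) / (Fintype.card R : ℝ) := by
      rw [Fintype.sum_prod_type, Fintype.sum_prod_type, Fintype.sum_prod_type]
      refine Finset.sum_congr rfl fun s _ => ?_
      rw [Fintype.sum_prod_type]
      refine Finset.sum_congr rfl fun gg _ => Finset.sum_congr rfl fun i _ => ?_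
      exact hsup_eq s gg i
    refine le_trans hkey (le_of_eq ?_)
    unfold avgMinEntropy
    rw [← hsum_eq]
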